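/- arXiv:1401.3387 — 2 statements merged into one kernel-verified Lean document; each statement's English description precedes it below -/
import Mathlib

section
/- For B, W, T, γ, σ > 0 and 0 ≤ x < T, the function f(x) = exp(-(2^(B/(W(T-x))) - 1) / ((γ/(1 - x/T))·σ)) is monotonically decreasing in x. That is, the probability of successful packet reception without interference, when transmission starts at time x with energy e spread over the remaining time T - x, decreases as the transmission start is delayed. -/
open Real

private lemma aux_slope (s t : ℝ) (hs : 0 < s) (hst : s < t) :
    (Real.exp s - 1) / s < (Real.exp t - 1) / t := by
  have ht : 0 < t := hs.trans hst
  have h := strictConvexOn_exp.2 (Set.mem_univ (0:ℝ)) (Set.mem_univ t)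
    (show (0:ℝ) ≠ t by linarith)
    (show (0:ℝ) < 1 - s/t by rw [sub_pos]; exact (div_lt_one ht).2 hst)
    (show (0:ℝ) < s/t by positivity) (by ring)
  simp only [smul_eq_mul, mul_zero, zero_add, Real.exp_zero, mul_one] at h
  rw [div_mul_cancel₀ s ht.ne'] at h
  rw [div_lt_div_iff₀ hs ht]
  have h' := mul_lt_mul_of_pos_right h ht
  have hc : s / t * t = s := div_mul_cancel₀ s ht.ne'
  have hst2 : s / t * t * Real.exp t = s * Real.exp t := by rw [hc]
  nlinarith [h', hc, hst2]

/-- The probability of successful packet reception without interference,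
`f(x) = exp(-(2^(B/(W(T-x))) - 1) / ((γ/(1 - x/T))·σ))`, is monotonically
decreasing in the transmission start time `x ∈ [0, T)`. -/
theorem stmt0 (B W T γ σ : ℝ) (hB : 0 < B) (hW : 0 < W) (hT : 0 < T)
    (hγ : 0 < γ) (hσ : 0 < σ) :
    StrictAntiOn
      (fun x : ℝ => Real.exp (-(((2 : ℝ) ^ (B / (W * (T - x))) - 1) /
        ((γ / (1 - x / T)) * σ))))
      (Set.Ico 0 T) := by
  intro x hx y hy hxy
  obtain ⟨hx0, hxT⟩ := hx
  obtain ⟨hy0, hyT⟩ := hy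
  simp only
  rw [Real.exp_lt_exp, neg_lt_neg_iff]
  have hux0 : 0 < T - x := sub_pos.2 hxT
  have huy0 : 0 < T - y := sub_pos.2 hyT
  have huxy : T - y < T - x := by linarith
  have hl2 : 0 < Real.log 2 := Real.log_pos one_lt_two
  set c := Real.log 2 * (B / W) with hc
  have hc0 : 0 < c := by positivity
  have hrw : ∀ u : ℝ, 0 < u → (2:ℝ) ^ (B / (W * u)) = Real.exp (c / u) := by
    intro u hu
    rw [Real.rpow_def_of_pos two_pos]
    congr 1
    rw [hc]
    field_simp
  have h1x : (1:ℝ) - x / T = (T - x) / T := by field_simp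
  have h1y : (1:ℝ) - y / T = (T - y) / T := by field_simp
  -- the key inequality
  have key : (Real.exp (c / (T - x)) - 1) * (T - x)
      < (Real.exp (c / (T - y)) - 1) * (T - y) := by
    have h := aux_slope (c / (T - x)) (c / (T - y))
      (by positivity) (div_lt_div_of_pos_left hc0 huy0 huxy)
    rw [div_div_eq_mul_div, div_div_eq_mul_div] at h
    have h2 := (div_lt_div_iff₀ hc0 hc0).mp h
    exact lt_of_mul_lt_mul_right h2 hc0.le
  rw [hrw _ hux0, hrw _ huy0, h1x, h1y,
    div_lt_div_iff₀ (mul_pos (div_pos hγ (div_pos hux0 hT)) hσ)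
      (mul_pos (div_pos hγ (div_pos huy0 hT)) hσ)]
  rw [div_div_eq_mul_div, div_div_eq_mul_div, div_mul_eq_mul_div,
    div_mul_eq_mul_div, ← mul_div_assoc, ← mul_div_assoc,
    div_lt_div_iff₀ huy0 hux0]
  nlinarith [mul_lt_mul_of_pos_right key (mul_pos (mul_pos hγ hT) hσ)]
end

section
/- For the function h(i) = exp(-(2^(B/(WT(1-iτ/T))) - 1)·(1 - iτ/T)·T·𝒩·/(e·σ)) / (1 + (2^(B/(WT(1-iτ/T))) - 1)·(1 - iτ/T)·c) with constants B, W, T, e, σ, 𝒩, c > 0 and 0 < τ < T, evaluated at i ∈ {0, 1}: h(1) < h(0). That is, the secondary user's probability of successful reception under primary interference is strictly smaller when it delays access to t = τ than when it accesses at t = 0. -/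
/-!
Write `x = 1 - iτ/T` for the fraction of the slot left for transmission and
`g(x) = (2^(B/(WTx)) - 1)·x`, so that `h(i) = exp(-g(x)·K) / (1 + g(x)·c)` with
`K = T𝒩/(eσ)`. By Bernoulli's inequality `g` is strictly decreasing in `x`, and
`u ↦ exp(-uK)/(1 + uc)` is strictly decreasing for `u ≥ 0`. Delaying access shrinks `x`
from `1` to `1 - τ/T`, which increases `g` and hence decreases `h`.
-/

open Real Set

theorem rpow_div_sub_one_mul_nonneg {b : ℝ} (hb : 1 ≤ b) {a x : ℝ} (ha : 0 ≤ a) (hx : 0 ≤ x) :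
    0 ≤ (b ^ (a / x) - 1) * x :=
  mul_nonneg (sub_nonneg.2 (one_le_rpow hb (by positivity))) hx

theorem strictAntiOn_rpow_div_sub_one_mul {b : ℝ} (hb : 1 < b) {a : ℝ} (ha : 0 < a) :
    StrictAntiOn (fun x => (b ^ (a / x) - 1) * x) (Ioi 0) := by
  intro x (hx : 0 < x) y (hy : 0 < y) hxy
  set s := b ^ (a / y) - 1
  have hs : 0 < s := sub_pos.2 (one_lt_rpow hb (by positivity))
  -- Bernoulli's inequality with exponent `y / x > 1`, applied to `b ^ (a / x) = (1 + s) ^ (y / x)`.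
  have bernoulli : 1 + y / x * s < b ^ (a / x) := by
    have hpow : (1 + s) ^ (y / x) = b ^ (a / x) := by
      rw [add_sub_cancel, ← rpow_mul (by linarith)]
      congr 1
      field_simp
    rw [← hpow]
    exact one_add_mul_self_lt_rpow_one_add (by linarith) hs.ne' ((one_lt_div hx).2 hxy)
  calc s * y = (1 + y / x * s - 1) * x := by field_simp; ring
    _ < (b ^ (a / x) - 1) * x := by gcongr

theorem strictAntiOn_exp_neg_mul_div_one_add_mul {K c : ℝ} (hK : 0 < K) (hc : 0 ≤ c) :
    StrictAntiOn (fun u => exp (-(u * K)) / (1 + u * c)) (Ici 0) := by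
  intro u (hu : 0 ≤ u) v (hv : 0 ≤ v) huv
  exact div_lt_div₀ (exp_lt_exp.2 (by nlinarith)) (by nlinarith) (exp_pos _).le (by positivity)

/-- The secondary user's probability of successful reception under primary
interference is strictly smaller when it delays access to `t = τ` (`i = 1`)
than when it accesses at `t = 0` (`i = 0`). -/
theorem stmt11 (B W T e σ N c τ : ℝ) (hB : 0 < B) (hW : 0 < W) (hT : 0 < T)
    (he : 0 < e) (hσ : 0 < σ) (hN : 0 < N) (hc : 0 < c)
    (hτ : 0 < τ) (hτT : τ < T) :
    let h : ℝ → ℝ := fun i =>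
      Real.exp (-(((2 : ℝ) ^ (B / (W * T * (1 - i * τ / T))) - 1) *
          (1 - i * τ / T) * T * N / (e * σ))) /
        (1 + ((2 : ℝ) ^ (B / (W * T * (1 - i * τ / T))) - 1) *
          (1 - i * τ / T) * c)
    h 1 < h 0 := by
  intro h
  set g : ℝ → ℝ := fun x => ((2 : ℝ) ^ (B / (W * T) / x) - 1) * x
  set φ : ℝ → ℝ := fun u => exp (-(u * (T * N / (e * σ)))) / (1 + u * c)
  have h_eq : ∀ i, h i = φ (g (1 - i * τ / T)) := by
    intro i
    simp only [h, φ, g, div_div, mul_div_assoc, mul_assoc]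
  have ha : 0 < B / (W * T) := by positivity
  have hx : 0 < 1 - τ / T := sub_pos.2 ((div_lt_one hT).2 hτT)
  have hg : g 1 < g (1 - τ / T) :=
    strictAntiOn_rpow_div_sub_one_mul one_lt_two ha (mem_Ioi.2 hx) (mem_Ioi.2 one_pos)
      (sub_lt_self _ (div_pos hτ hT))
  rw [h_eq, h_eq, one_mul, zero_mul, zero_div, sub_zero]
  exact strictAntiOn_exp_neg_mul_div_one_add_mul (by positivity) hc.le
    (rpow_div_sub_one_mul_nonneg one_le_two ha.le zero_le_one)
    (rpow_div_sub_one_mul_nonneg one_le_two ha.le hx.le) hg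
end
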